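/- arXiv:2209.02307 — 2 statements merged into one kernel-verified Lean document; each statement's English description precedes it below -/
import Mathlib

section
/- Over finite words, the languages definable in coSafetyFO (with exactly one free variable) are exactly the concatenations of FO-definable finite-word languages with all finite words: ⟦coSafetyFO⟧_fin = {L·(2^Σ)^* : L ∈ ⟦FO⟧_fin}. -/
namespace CoSafetyPaper

/-- LTL formulas in negation normal form over proposition letters `PL`. -/
inductive LTLF (PL : Type) : Type
  | pos : PL → LTLF PL                      -- p
  | nneg : PL → LTLF PL                     -- ¬p
  | disj : LTLF PL → LTLF PL → LTLF PL      -- φ ∨ ψ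
  | conj : LTLF PL → LTLF PL → LTLF PL      -- φ ∧ ψ
  | next : LTLF PL → LTLF PL                -- X φ
  | wnext : LTLF PL → LTLF PL               -- wX φ
  | untl : LTLF PL → LTLF PL → LTLF PL      -- φ U ψ
  | rel : LTLF PL → LTLF PL → LTLF PL       -- φ R ψ

/-- Satisfaction of an LTL formula by a word given as `σ : ℕ → Set PL`
together with a length `L : ℕ∞` (`⊤` for infinite words), at position `i`. -/
def Sat {PL : Type} (σ : ℕ → Set PL) (L : ℕ∞) : LTLF PL → ℕ → Prop
  | .pos p, i => p ∈ σ i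
  | .nneg p, i => p ∉ σ i
  | .disj φ ψ, i => Sat σ L φ i ∨ Sat σ L ψ i
  | .conj φ ψ, i => Sat σ L φ i ∧ Sat σ L ψ i
  | .next φ, i => ((i + 1 : ℕ) : ℕ∞) < L ∧ Sat σ L φ (i + 1)
  | .wnext φ, i => ((i + 1 : ℕ) : ℕ∞) = L ∨ Sat σ L φ (i + 1)
  | .untl φ ψ, i => ∃ j : ℕ, i ≤ j ∧ (j : ℕ∞) < L ∧ Sat σ L ψ j ∧
      ∀ k : ℕ, i ≤ k → k < j → Sat σ L φ k
  | .rel φ ψ, i =>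
      (∀ j : ℕ, i ≤ j → (j : ℕ∞) < L → Sat σ L ψ j) ∨
      (∃ k : ℕ, i ≤ k ∧ (k : ℕ∞) < L ∧ Sat σ L φ k ∧
        ∀ j : ℕ, i ≤ j → j ≤ k → Sat σ L ψ j)

/-- The function `ℕ → Set PL` associated with a finite word (a list of letters). -/
def wordOf {PL : Type} (xs : List (Set PL)) : ℕ → Set PL := fun n => xs.getD n ∅

/-- Satisfaction over a finite word. -/
def FinSat {PL : Type} (xs : List (Set PL)) (φ : LTLF PL) (i : ℕ) : Prop :=
  Sat (wordOf xs) (xs.length : ℕ∞) φ i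

/-- `L_fin(φ)`: the nonempty finite words satisfying `φ` (at position 0). -/
def LfinL {PL : Type} (φ : LTLF PL) : Set (List (Set PL)) :=
  {xs | xs ≠ [] ∧ FinSat xs φ 0}

/-- `L(φ)`: the infinite words satisfying `φ` (at position 0). -/
def LinfL {PL : Type} (φ : LTLF PL) : Set (ℕ → Set PL) :=
  {σ | Sat σ ⊤ φ 0}

/-- `L·(2^Σ)^*` : concatenation of a language of finite words with all finite words. -/
def catFin {PL : Type} (Lg : Set (List (Set PL))) : Set (List (Set PL)) :=
  {w | ∃ u ∈ Lg, ∃ v : List (Set PL), w = u ++ v}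

/-- Concatenation of a finite word with an infinite word. -/
def listConc {PL : Type} (u : List (Set PL)) (v : ℕ → Set PL) : ℕ → Set PL :=
  fun n => if n < u.length then wordOf u n else v (n - u.length)

/-- `L·(2^Σ)^ω` : concatenation of a language of finite words with all infinite words. -/
def catInf {PL : Type} (Lg : Set (List (Set PL))) : Set (ℕ → Set PL) :=
  {w | ∃ u ∈ Lg, ∃ v : ℕ → Set PL, w = listConc u v}

/-- The prefix `σ_[0,i]` of an infinite word, as a list. -/
def prefixList {PL : Type} (σ : ℕ → Set PL) (i : ℕ) : List (Set PL) :=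
  (List.range (i + 1)).map σ

/-- co-safety ω-languages. -/
def IsCoSafetyLang {PL : Type} (Lg : Set (ℕ → Set PL)) : Prop :=
  ∀ σ ∈ Lg, ∃ i : ℕ, ∀ σ' : ℕ → Set PL, listConc (prefixList σ i) σ' ∈ Lg

/-- safety ω-languages. -/
def IsSafetyLang {PL : Type} (Lg : Set (ℕ → Set PL)) : Prop :=
  ∀ σ : ℕ → Set PL, σ ∉ Lg → ∃ i : ℕ, ∀ σ' : ℕ → Set PL, listConc (prefixList σ i) σ' ∉ Lg

/-- co-safety languages of finite words. -/
def IsCoSafetyLangFin {PL : Type} (Lg : Set (List (Set PL))) : Prop :=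
  (∀ σ ∈ Lg, σ ≠ []) ∧
  ∀ σ ∈ Lg, ∃ i < σ.length, ∀ σ' : List (Set PL), σ.take (i + 1) ++ σ' ∈ Lg

/-- safety languages of finite words. -/
def IsSafetyLangFin {PL : Type} (Lg : Set (List (Set PL))) : Prop :=
  (∀ σ ∈ Lg, σ ≠ []) ∧
  ∀ σ : List (Set PL), σ ≠ [] → σ ∉ Lg →
    ∃ i < σ.length, ∀ σ' : List (Set PL), σ.take (i + 1) ++ σ' ∉ Lg

/-- coSafetyLTL: only X, wX and U as temporal operators. -/
inductive CoSafetyLTL {PL : Type} : LTLF PL → Prop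
  | pos (p : PL) : CoSafetyLTL (.pos p)
  | nneg (p : PL) : CoSafetyLTL (.nneg p)
  | disj {φ ψ : LTLF PL} : CoSafetyLTL φ → CoSafetyLTL ψ → CoSafetyLTL (.disj φ ψ)
  | conj {φ ψ : LTLF PL} : CoSafetyLTL φ → CoSafetyLTL ψ → CoSafetyLTL (.conj φ ψ)
  | next {φ : LTLF PL} : CoSafetyLTL φ → CoSafetyLTL (.next φ)
  | wnext {φ : LTLF PL} : CoSafetyLTL φ → CoSafetyLTL (.wnext φ)
  | untl {φ ψ : LTLF PL} : CoSafetyLTL φ → CoSafetyLTL ψ → CoSafetyLTL (.untl φ ψ)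

/-- coSafetyLTL without the weak tomorrow operator: only X and U. -/
inductive CoSafetyLTLnoW {PL : Type} : LTLF PL → Prop
  | pos (p : PL) : CoSafetyLTLnoW (.pos p)
  | nneg (p : PL) : CoSafetyLTLnoW (.nneg p)
  | disj {φ ψ : LTLF PL} : CoSafetyLTLnoW φ → CoSafetyLTLnoW ψ → CoSafetyLTLnoW (.disj φ ψ)
  | conj {φ ψ : LTLF PL} : CoSafetyLTLnoW φ → CoSafetyLTLnoW ψ → CoSafetyLTLnoW (.conj φ ψ)
  | next {φ : LTLF PL} : CoSafetyLTLnoW φ → CoSafetyLTLnoW (.next φ)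
  | untl {φ ψ : LTLF PL} : CoSafetyLTLnoW φ → CoSafetyLTLnoW ψ → CoSafetyLTLnoW (.untl φ ψ)

/-- SafetyLTL: only X, wX and R as temporal operators. -/
inductive SafetyLTL {PL : Type} : LTLF PL → Prop
  | pos (p : PL) : SafetyLTL (.pos p)
  | nneg (p : PL) : SafetyLTL (.nneg p)
  | disj {φ ψ : LTLF PL} : SafetyLTL φ → SafetyLTL ψ → SafetyLTL (.disj φ ψ)
  | conj {φ ψ : LTLF PL} : SafetyLTL φ → SafetyLTL ψ → SafetyLTL (.conj φ ψ)
  | next {φ : LTLF PL} : SafetyLTL φ → SafetyLTL (.next φ)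
  | wnext {φ : LTLF PL} : SafetyLTL φ → SafetyLTL (.wnext φ)
  | rel {φ ψ : LTLF PL} : SafetyLTL φ → SafetyLTL ψ → SafetyLTL (.rel φ ψ)

/-- SafetyLTL without the tomorrow operator: only wX and R. -/
inductive SafetyLTLnoX {PL : Type} : LTLF PL → Prop
  | pos (p : PL) : SafetyLTLnoX (.pos p)
  | nneg (p : PL) : SafetyLTLnoX (.nneg p)
  | disj {φ ψ : LTLF PL} : SafetyLTLnoX φ → SafetyLTLnoX ψ → SafetyLTLnoX (.disj φ ψ)
  | conj {φ ψ : LTLF PL} : SafetyLTLnoX φ → SafetyLTLnoX ψ → SafetyLTLnoX (.conj φ ψ)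
  | wnext {φ : LTLF PL} : SafetyLTLnoX φ → SafetyLTLnoX (.wnext φ)
  | rel {φ ψ : LTLF PL} : SafetyLTLnoX φ → SafetyLTLnoX ψ → SafetyLTLnoX (.rel φ ψ)

/-- First-order formulas over words: signature `<`, `=`, and a unary predicate
for each proposition letter; variables are natural numbers. -/
inductive FOW (PL : Type) : Type
  | lt : ℕ → ℕ → FOW PL
  | eq : ℕ → ℕ → FOW PL
  | pred : PL → ℕ → FOW PL
  | not : FOW PL → FOW PL
  | disj : FOW PL → FOW PL → FOW PL
  | conj : FOW PL → FOW PL → FOW PL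
  | ex : ℕ → FOW PL → FOW PL
  | all : ℕ → FOW PL → FOW PL

/-- First-order satisfaction over a word `σ` with length `L : ℕ∞` (`⊤` for
infinite words) under a valuation `v` of the variables into positions. -/
def FOSat {PL : Type} (σ : ℕ → Set PL) (L : ℕ∞) : FOW PL → (ℕ → ℕ) → Prop
  | .lt x y, v => v x < v y
  | .eq x y, v => v x = v y
  | .pred p x, v => p ∈ σ (v x)
  | .not φ, v => ¬ FOSat σ L φ v
  | .disj φ ψ, v => FOSat σ L φ v ∨ FOSat σ L ψ v
  | .conj φ ψ, v => FOSat σ L φ v ∧ FOSat σ L ψ v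
  | .ex x φ, v => ∃ n : ℕ, (n : ℕ∞) < L ∧ FOSat σ L φ (Function.update v x n)
  | .all x φ, v => ∀ n : ℕ, (n : ℕ∞) < L → FOSat σ L φ (Function.update v x n)

/-- Free variables of a first-order formula. -/
def FOW.free {PL : Type} : FOW PL → Finset ℕ
  | .lt x y => {x, y}
  | .eq x y => {x, y}
  | .pred _ x => {x}
  | .not φ => φ.free
  | .disj φ ψ => φ.free ∪ ψ.free
  | .conj φ ψ => φ.free ∪ ψ.free
  | .ex x φ => φ.free.erase x
  | .all x φ => φ.free.erase x

/-- `φ → ψ` as an abbreviation. -/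
def FOW.impl {PL : Type} (φ ψ : FOW PL) : FOW PL := .disj (.not φ) ψ

/-- `y ≤ x` as an abbreviation. -/
def FOW.le {PL : Type} (y x : ℕ) : FOW PL := .disj (.lt y x) (.eq y x)

/-- The coSafetyFO fragment:
`φ ::= x<y | x=y | x≠y | P(x) | ¬P(x) | φ∨φ | φ∧φ | ∃y(x<y ∧ φ) | ∀y(x<y<z → φ)`. -/
inductive CoSafetyFO {PL : Type} : FOW PL → Prop
  | lt (x y : ℕ) : CoSafetyFO (.lt x y)
  | eq (x y : ℕ) : CoSafetyFO (.eq x y)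
  | ne (x y : ℕ) : CoSafetyFO (.not (.eq x y))
  | pred (p : PL) (x : ℕ) : CoSafetyFO (.pred p x)
  | npred (p : PL) (x : ℕ) : CoSafetyFO (.not (.pred p x))
  | disj {φ ψ : FOW PL} : CoSafetyFO φ → CoSafetyFO ψ → CoSafetyFO (.disj φ ψ)
  | conj {φ ψ : FOW PL} : CoSafetyFO φ → CoSafetyFO ψ → CoSafetyFO (.conj φ ψ)
  | ex (x y : ℕ) {φ : FOW PL} : CoSafetyFO φ →
      CoSafetyFO (.ex y (.conj (.lt x y) φ))
  | all (x y z : ℕ) {φ : FOW PL} : CoSafetyFO φ →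
      CoSafetyFO (.all y (FOW.impl (.conj (.lt x y) (.lt y z)) φ))

/-- The SafetyFO fragment:
`φ ::= x<y | x=y | x≠y | P(x) | ¬P(x) | φ∨φ | φ∧φ | ∃y(x<y<z ∧ φ) | ∀y(x<y → φ)`. -/
inductive SafetyFO {PL : Type} : FOW PL → Prop
  | lt (x y : ℕ) : SafetyFO (.lt x y)
  | eq (x y : ℕ) : SafetyFO (.eq x y)
  | ne (x y : ℕ) : SafetyFO (.not (.eq x y))
  | pred (p : PL) (x : ℕ) : SafetyFO (.pred p x)
  | npred (p : PL) (x : ℕ) : SafetyFO (.not (.pred p x))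
  | disj {φ ψ : FOW PL} : SafetyFO φ → SafetyFO ψ → SafetyFO (.disj φ ψ)
  | conj {φ ψ : FOW PL} : SafetyFO φ → SafetyFO ψ → SafetyFO (.conj φ ψ)
  | ex (x y z : ℕ) {φ : FOW PL} : SafetyFO φ →
      SafetyFO (.ex y (.conj (.conj (.lt x y) (.lt y z)) φ))
  | all (x y : ℕ) {φ : FOW PL} : SafetyFO φ →
      SafetyFO (.all y (FOW.impl (.lt x y) φ))

/-- A formula has exactly one free variable. -/
def HasOneFree {PL : Type} (φ : FOW PL) : Prop := ∃ x : ℕ, φ.free = {x}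

/-- `L_fin(φ(x))` for a first-order formula with (exactly one) free variable:
nonempty finite words that satisfy it with the free variable interpreted as `0`. -/
def LfinFO {PL : Type} (φ : FOW PL) : Set (List (Set PL)) :=
  {xs | xs ≠ [] ∧ FOSat (wordOf xs) (xs.length : ℕ∞) φ (fun _ => 0)}

/-- `L(φ(x))` for a first-order formula with (exactly one) free variable:
infinite words that satisfy it with the free variable interpreted as `0`. -/
def LinfFO {PL : Type} (φ : FOW PL) : Set (ℕ → Set PL) :=
  {σ | FOSat σ ⊤ φ (fun _ => 0)}

/-- `⟦coSafetyFO⟧_fin`. -/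
def CoSafetyFOFin (PL : Type) : Set (Set (List (Set PL))) :=
  {Lg | ∃ φ : FOW PL, CoSafetyFO φ ∧ HasOneFree φ ∧ Lg = LfinFO φ}

/-- `⟦coSafetyFO⟧`. -/
def CoSafetyFOInf (PL : Type) : Set (Set (ℕ → Set PL)) :=
  {Lg | ∃ φ : FOW PL, CoSafetyFO φ ∧ HasOneFree φ ∧ Lg = LinfFO φ}

/-- `⟦SafetyFO⟧_fin`. -/
def SafetyFOFin (PL : Type) : Set (Set (List (Set PL))) :=
  {Lg | ∃ φ : FOW PL, SafetyFO φ ∧ HasOneFree φ ∧ Lg = LfinFO φ}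

/-- `⟦FO⟧_fin` (formulas with exactly one free variable). -/
def FOFin (PL : Type) : Set (Set (List (Set PL))) :=
  {Lg | ∃ φ : FOW PL, HasOneFree φ ∧ Lg = LfinFO φ}

/-- `⟦coSafetyLTL⟧_fin`. -/
def CoSafetyLTLFin (PL : Type) : Set (Set (List (Set PL))) :=
  {Lg | ∃ φ : LTLF PL, CoSafetyLTL φ ∧ Lg = LfinL φ}

/-- `⟦coSafetyLTL\{wX}⟧_fin`. -/
def CoSafetyLTLnoWFin (PL : Type) : Set (Set (List (Set PL))) :=
  {Lg | ∃ φ : LTLF PL, CoSafetyLTLnoW φ ∧ Lg = LfinL φ}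

/-- `⟦SafetyLTL⟧_fin`. -/
def SafetyLTLFin (PL : Type) : Set (Set (List (Set PL))) :=
  {Lg | ∃ φ : LTLF PL, SafetyLTL φ ∧ Lg = LfinL φ}

/-- `⟦SafetyLTL\{X}⟧_fin`. -/
def SafetyLTLnoXFin (PL : Type) : Set (Set (List (Set PL))) :=
  {Lg | ∃ φ : LTLF PL, SafetyLTLnoX φ ∧ Lg = LfinL φ}

/-- `⟦LTL⟧_fin`. -/
def LTLFin (PL : Type) : Set (Set (List (Set PL))) :=
  {Lg | ∃ φ : LTLF PL, Lg = LfinL φ}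

/-- `⟦LTL⟧`. -/
def LTLInf (PL : Type) : Set (Set (ℕ → Set PL)) :=
  {Lg | ∃ φ : LTLF PL, Lg = LinfL φ}

/-- `⟦coSafetyLTL⟧`. -/
def CoSafetyLTLInf (PL : Type) : Set (Set (ℕ → Set PL)) :=
  {Lg | ∃ φ : LTLF PL, CoSafetyLTL φ ∧ Lg = LinfL φ}

/-- `⟦SafetyLTL⟧`. -/
def SafetyLTLInf (PL : Type) : Set (Set (ℕ → Set PL)) :=
  {Lg | ∃ φ : LTLF PL, SafetyLTL φ ∧ Lg = LinfL φ}

/-- Quantifier-free first-order formulas in one (implicit) variable, i.e.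
boolean combinations of the atoms `P(x)`, `x=x`, `x<x`. -/
inductive QF (PL : Type) : Type
  | tru : QF PL
  | fls : QF PL
  | pos : PL → QF PL
  | qnot : QF PL → QF PL
  | qor : QF PL → QF PL → QF PL
  | qand : QF PL → QF PL → QF PL

/-- Evaluation of a quantifier-free one-variable formula at a letter. -/
def QF.sat {PL : Type} (s : Set PL) : QF PL → Prop
  | .tru => True
  | .fls => False
  | .pos p => p ∈ s
  | .qnot φ => ¬ QF.sat s φ
  | .qor φ ψ => QF.sat s φ ∨ QF.sat s ψ
  | .qand φ ψ => QF.sat s φ ∧ QF.sat s ψ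

/-- An ∃-formula with free variables `z₀,…,z_m`:
`∃x₀…∃x_n (x₀<⋯<x_n ∧ z₀=x₀ ∧ ⋀ z_k=x_{i_k} ∧ ⋀ α_j(x_j) ∧ ⋀ ∀y(x_{j−1}<y<x_j → β_j(y)))`. -/
structure ExForm (PL : Type) (m : ℕ) where
  n : ℕ
  bind : Fin m → Fin (n + 1)
  alpha : Fin (n + 1) → QF PL
  beta : Fin n → QF PL

/-- Satisfaction of an ∃-formula on the word `σ` of length `L` (`⊤` if infinite),
where `z : Fin (m+1) → ℕ` interprets the free variables `z₀,…,z_m`. -/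
def ExForm.ESat {PL : Type} {m : ℕ} (e : ExForm PL m) (σ : ℕ → Set PL) (L : ℕ∞)
    (z : Fin (m + 1) → ℕ) : Prop :=
  ∃ x : Fin (e.n + 1) → ℕ,
    StrictMono x ∧
    (∀ j : Fin (e.n + 1), ((x j : ℕ) : ℕ∞) < L) ∧
    z 0 = x 0 ∧
    (∀ k : Fin m, z k.succ = x (e.bind k)) ∧
    (∀ j : Fin (e.n + 1), (e.alpha j).sat (σ (x j))) ∧
    (∀ j : Fin e.n, ∀ y : ℕ, x j.castSucc < y → y < x j.succ → (e.beta j).sat (σ y))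

/-- Satisfaction of a disjunction of ∃-formulas. -/
def DisjESat {PL : Type} {m : ℕ} (ds : List (ExForm PL m)) (σ : ℕ → Set PL) (L : ℕ∞)
    (z : Fin (m + 1) → ℕ) : Prop :=
  ∃ e ∈ ds, ExForm.ESat e σ L z

/-- Size (number of symbols) of an LTL formula. -/
def LTLF.size {PL : Type} : LTLF PL → ℕ
  | .pos _ => 1
  | .nneg _ => 2
  | .disj φ ψ => φ.size + ψ.size + 1
  | .conj φ ψ => φ.size + ψ.size + 1
  | .next φ => φ.size + 1
  | .wnext φ => φ.size + 1
  | .untl φ ψ => φ.size + ψ.size + 1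
  | .rel φ ψ => φ.size + ψ.size + 1

/-- Size (number of symbols) of a first-order formula. -/
def FOW.size {PL : Type} : FOW PL → ℕ
  | .lt _ _ => 3
  | .eq _ _ => 3
  | .pred _ _ => 2
  | .not φ => φ.size + 1
  | .disj φ ψ => φ.size + ψ.size + 1
  | .conj φ ψ => φ.size + ψ.size + 1
  | .ex _ φ => φ.size + 2
  | .all _ φ => φ.size + 2

/-- Bounded formulas relative to a variable `x`: every quantifier is of the form
`∃y(y ≤ x ∧ …)` or `∀y(y ≤ x → …)`. -/
inductive BoundedBy {PL : Type} (x : ℕ) : FOW PL → Prop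
  | lt (a b : ℕ) : BoundedBy x (.lt a b)
  | eq (a b : ℕ) : BoundedBy x (.eq a b)
  | pred (p : PL) (a : ℕ) : BoundedBy x (.pred p a)
  | not {φ : FOW PL} : BoundedBy x φ → BoundedBy x (.not φ)
  | disj {φ ψ : FOW PL} : BoundedBy x φ → BoundedBy x ψ → BoundedBy x (.disj φ ψ)
  | conj {φ ψ : FOW PL} : BoundedBy x φ → BoundedBy x ψ → BoundedBy x (.conj φ ψ)
  | ex (y : ℕ) {φ : FOW PL} : BoundedBy x φ →
      BoundedBy x (.ex y (.conj (FOW.le y x) φ))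
  | all (y : ℕ) {φ : FOW PL} : BoundedBy x φ →
      BoundedBy x (.all y (FOW.impl (FOW.le y x) φ))

/-- EBFO sentences: `∃x.φ(x)` with `φ(x)` bounded and with exactly one free variable `x`. -/
def IsEBFO {PL : Type} (ψ : FOW PL) : Prop :=
  ∃ (x : ℕ) (φ : FOW PL), ψ = .ex x φ ∧ BoundedBy x φ ∧ φ.free = {x}

/-- The ω-language of a sentence (the valuation is irrelevant). -/
def LinfSent {PL : Type} (ψ : FOW PL) : Set (ℕ → Set PL) :=
  {σ | FOSat σ ⊤ ψ (fun _ => 0)}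


/-!
A coSafetyFO formula only quantifies existentially above a variable or universally strictly
between two variables, so once it holds on a nonempty word with all its variables inside the
word, it keeps holding after letters are appended. Its language `L` therefore equals
`L·(2^Σ)^*`, and `L` is FO-definable.

Conversely, a word lies in `L_fin(φ(x))·(2^Σ)^*` iff one of its prefixes `[0, Y]` satisfies `φ`.
Pushing negations inward and bounding every quantifier of `φ` by a fresh variable `b` gives a
coSafetyFO formula expressing "`φ` holds on `[0, b]`"; then `φ|[0,0] ∨ ∃b (0 < b ∧ φ|[0,b])`
defines exactly the concatenated language.
-/

section
variable {PL : Type}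

/-- Not capture-avoiding: only meaningful when `t` is not bound in the formula. -/
def FOW.subst (u t : ℕ) : FOW PL → FOW PL
  | .lt a c => .lt (if a = u then t else a) (if c = u then t else c)
  | .eq a c => .eq (if a = u then t else a) (if c = u then t else c)
  | .pred p a => .pred p (if a = u then t else a)
  | .not φ => .not (φ.subst u t)
  | .disj φ ψ => .disj (φ.subst u t) (ψ.subst u t)
  | .conj φ ψ => .conj (φ.subst u t) (ψ.subst u t)
  | .ex w φ => if w = u then .ex w φ else .ex w (φ.subst u t)
  | .all w φ => if w = u then .all w φ else .all w (φ.subst u t)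

def FOW.bnd : FOW PL → Finset ℕ
  | .lt _ _ | .eq _ _ | .pred _ _ => ∅
  | .not φ => φ.bnd
  | .disj φ ψ | .conj φ ψ => φ.bnd ∪ ψ.bnd
  | .ex u φ | .all u φ => insert u φ.bnd

@[simp] lemma FOW.bnd_subst (u t : ℕ) (φ : FOW PL) : (φ.subst u t).bnd = φ.bnd := by
  induction φ <;> simp only [FOW.subst, FOW.bnd] <;> (try split_ifs) <;> simp_all [FOW.bnd]

lemma FOW.free_subst_subset (u t : ℕ) (φ : FOW PL) :
    (φ.subst u t).free ⊆ insert t (φ.free.erase u) := by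
  induction φ with
  | not φ ih => exact ih
  | disj φ ψ ih₁ ih₂ | conj φ ψ ih₁ ih₂ =>
    intro k; simp only [FOW.subst, FOW.free]; grind
  | ex w φ ih | all w φ ih =>
    intro k; simp only [FOW.subst]; split_ifs <;> simp only [FOW.free] <;> grind
  | _ => intro k; simp only [FOW.subst, FOW.free]; grind

lemma foSat_congr_valuation {σ : ℕ → Set PL} {L : ℕ∞} {φ : FOW PL} {v v' : ℕ → ℕ}
    (h : ∀ z ∈ φ.free, v z = v' z) : FOSat σ L φ v ↔ FOSat σ L φ v' := by
  induction φ generalizing v v' with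
  | ex w φ ih | all w φ ih =>
    simp only [FOSat]
    grind [FOW.free, Function.update_apply]
  | not φ ih => exact not_congr (ih h)
  | disj φ ψ ih₁ ih₂ =>
    simp only [FOW.free, Finset.mem_union] at h
    exact or_congr (ih₁ fun z hz => h z (.inl hz)) (ih₂ fun z hz => h z (.inr hz))
  | conj φ ψ ih₁ ih₂ =>
    simp only [FOW.free, Finset.mem_union] at h
    exact and_congr (ih₁ fun z hz => h z (.inl hz)) (ih₂ fun z hz => h z (.inr hz))
  | _ => simp_all [FOSat, FOW.free]

lemma foSat_congr_word {σ σ' : ℕ → Set PL} {L : ℕ∞} {φ : FOW PL} {v : ℕ → ℕ}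
    (hσ : ∀ n : ℕ, (n : ℕ∞) < L → σ n = σ' n) (hv : ∀ z ∈ φ.free, (v z : ℕ∞) < L) :
    FOSat σ L φ v ↔ FOSat σ' L φ v := by
  induction φ generalizing v with
  | ex w φ ih | all w φ ih =>
    simp only [FOSat]
    grind [FOW.free, Function.update_apply]
  | _ => simp_all [FOSat, FOW.free]

lemma foSat_subst {σ : ℕ → Set PL} {L : ℕ∞} {u t : ℕ} {φ : FOW PL} {v : ℕ → ℕ}
    (ht : t ∉ φ.bnd) :
    FOSat σ L (φ.subst u t) v ↔ FOSat σ L φ (Function.update v u (v t)) := by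
  induction φ generalizing v with
  | ex w φ ih | all w φ ih =>
    simp only [FOW.bnd, Finset.mem_insert, not_or] at ht
    by_cases hw : w = u
    · subst hw; simp [FOW.subst, FOSat]
    · simp only [FOW.subst, if_neg hw, FOSat, ih ht.2, Function.update_of_ne ht.1,
        Function.update_comm hw]
  | _ => simp_all [FOSat, FOW.subst, FOW.bnd, apply_ite v, Function.update_apply]

lemma CoSafetyFO.subst (u t : ℕ) {φ : FOW PL} (h : CoSafetyFO φ) :
    CoSafetyFO (φ.subst u t) := by
  induction h with
  | ex x y h ih =>
    rw [FOW.subst]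
    split_ifs with hy
    · exact .ex x y h
    · simp only [FOW.subst, if_neg hy]; exact .ex _ y ih
  | all x y z h ih =>
    rw [FOW.subst]
    split_ifs with hy
    · exact .all x y z h
    · simp only [FOW.impl, FOW.subst, if_neg hy]; exact .all _ y _ ih
  | _ => simp only [FOW.subst]; constructor <;> assumption

lemma CoSafetyFO.foSat_append {φ : FOW PL} (h : CoSafetyFO φ) {u w : List (Set PL)}
    {v : ℕ → ℕ} (hv : ∀ z, v z < u.length)
    (hφ : FOSat (wordOf u) u.length φ v) : FOSat (wordOf (u ++ w)) (u ++ w).length φ v := by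
  induction h generalizing v with
  | pred | npred => simpa only [FOSat, wordOf, List.getD_append _ _ _ _ (hv _)] using hφ
  | disj _ _ ih₁ ih₂ => exact hφ.imp (ih₁ hv) (ih₂ hv)
  | conj _ _ ih₁ ih₂ => exact hφ.imp (ih₁ hv) (ih₂ hv)
  | ex x y _ ih =>
    obtain ⟨n, hn, hxy, hφ⟩ := hφ
    have hn' : n < u.length := by exact_mod_cast hn
    refine ⟨n, ?_, hxy, ih ?_ hφ⟩
    · rw [List.length_append]; exact_mod_cast Nat.lt_add_right _ hn'
    · exact (Function.forall_update_iff v fun _ k => k < u.length).mpr ⟨hn', fun z _ => hv z⟩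
  | all x y z _ ih =>
    intro n hn
    by_cases hguard :
        FOSat (wordOf u) u.length (.conj (.lt x y) (.lt y z)) (Function.update v y n)
    · have hn' : n < u.length := by
        simp only [FOSat, Function.update_self] at hguard
        rcases eq_or_ne z y with rfl | hzy
        · simp at hguard
        · exact hguard.2.trans (by simpa [hzy] using hv z)
      refine .inr (ih ?_ ((hφ n (by exact_mod_cast hn')).resolve_left (not_not.mpr hguard)))
      exact (Function.forall_update_iff v fun _ k => k < u.length).mpr ⟨hn', fun z _ => hv z⟩
    · exact .inl hguard
  | _ => exact hφ

lemma catFin_LfinFO_of_coSafetyFO {φ : FOW PL} (h : CoSafetyFO φ) :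
    catFin (LfinFO φ) = LfinFO φ := by
  refine subset_antisymm ?_ fun w hw => ⟨w, hw, [], (List.append_nil w).symm⟩
  rintro _ ⟨u, ⟨hu, hφ⟩, w, rfl⟩
  exact ⟨by simp [hu], h.foSat_append (fun _ => List.length_pos_iff.mpr hu) hφ⟩

/-- `∃ u ∈ [o, b], χ`. Since coSafetyFO only quantifies strictly above a variable, the two
endpoints are handled by substitution. -/
def FOW.exUpTo (o u b : ℕ) (χ : FOW PL) : FOW PL :=
  .disj (χ.subst u o) (.disj (χ.subst u b) (.ex u (.conj (.lt o u) (.conj (.lt u b) χ))))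

def FOW.allUpTo (o u b : ℕ) (χ : FOW PL) : FOW PL :=
  .conj (χ.subst u o) (.conj (χ.subst u b) (.all u (.impl (.conj (.lt o u) (.lt u b)) χ)))

/-- The polarity `s` records whether `φ` or its negation is relativized to `[o, b]`: negations
are pushed to the atoms on the way, since coSafetyFO has no general negation. -/
def FOW.relativize (o b : ℕ) : FOW PL → Bool → FOW PL
  | .lt a c, true => .lt a c
  | .lt a c, false => .disj (.lt c a) (.eq a c)
  | .eq a c, true => .eq a c
  | .eq a c, false => .not (.eq a c)
  | .pred p a, true => .pred p a
  | .pred p a, false => .not (.pred p a)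
  | .not φ, s => φ.relativize o b !s
  | .disj φ ψ, true => .disj (φ.relativize o b true) (ψ.relativize o b true)
  | .disj φ ψ, false => .conj (φ.relativize o b false) (ψ.relativize o b false)
  | .conj φ ψ, true => .conj (φ.relativize o b true) (ψ.relativize o b true)
  | .conj φ ψ, false => .disj (φ.relativize o b false) (ψ.relativize o b false)
  | .ex u φ, true => .exUpTo o u b (φ.relativize o b true)
  | .ex u φ, false => .allUpTo o u b (φ.relativize o b false)
  | .all u φ, true => .allUpTo o u b (φ.relativize o b true)
  | .all u φ, false => .exUpTo o u b (φ.relativize o b false)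

lemma FOW.bnd_relativize_subset (o b : ℕ) (φ : FOW PL) (s : Bool) :
    (φ.relativize o b s).bnd ⊆ φ.bnd := by
  induction φ generalizing s with
  | not φ ih => exact ih !s
  | disj φ ψ ih₁ ih₂ | conj φ ψ ih₁ ih₂ =>
    cases s <;> exact Finset.union_subset_union (ih₁ _) (ih₂ _)
  | ex u φ ih | all u φ ih =>
    cases s <;> simpa [relativize, exUpTo, allUpTo, impl, bnd] using
      Finset.insert_subset_insert u (ih _)
  | _ => cases s <;> simp [relativize, bnd]

lemma FOW.free_relativize_subset (o b : ℕ) (φ : FOW PL) (s : Bool) :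
    (φ.relativize o b s).free ⊆ insert o (insert b φ.free) := by
  induction φ generalizing s with
  | not φ ih => exact ih !s
  | disj φ ψ ih₁ ih₂ | conj φ ψ ih₁ ih₂ =>
    have h₁ := ih₁ s
    have h₂ := ih₂ s
    intro k; cases s <;> simp only [relativize, free] <;> grind
  | ex u φ ih | all u φ ih =>
    have h := ih s
    have hsubst := fun t => free_subst_subset u t (φ.relativize o b s)
    intro k; cases s <;> simp only [relativize, exUpTo, allUpTo, impl, free] <;> grind
  | _ => cases s <;> simp [relativize, free] <;> grind

lemma CoSafetyFO.exUpTo (o u b : ℕ) {χ : FOW PL} (h : CoSafetyFO χ) :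
    CoSafetyFO (.exUpTo o u b χ) :=
  .disj (h.subst u o) (.disj (h.subst u b) (.ex o u (.conj (.lt u b) h)))

lemma CoSafetyFO.allUpTo (o u b : ℕ) {χ : FOW PL} (h : CoSafetyFO χ) :
    CoSafetyFO (.allUpTo o u b χ) :=
  .conj (h.subst u o) (.conj (h.subst u b) (.all o u b h))

lemma CoSafetyFO.relativize (o b : ℕ) (φ : FOW PL) (s : Bool) :
    CoSafetyFO (φ.relativize o b s) := by
  induction φ generalizing s with
  | lt | eq | pred => cases s <;> constructor <;> constructor
  | not φ ih => exact ih !s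
  | disj φ ψ ih₁ ih₂ | conj φ ψ ih₁ ih₂ => cases s <;> constructor <;> solve_by_elim
  | ex u φ ih => cases s; exacts [.allUpTo o u b (ih _), .exUpTo o u b (ih _)]
  | all u φ ih => cases s; exacts [.exUpTo o u b (ih _), .allUpTo o u b (ih _)]

lemma exists_le_iff_endpoints_or_between {P : ℕ → Prop} {m : ℕ} {L : ℕ∞}
    (hL : (m : ℕ∞) < L) :
    (∃ n ≤ m, P n) ↔ P 0 ∨ P m ∨ ∃ n : ℕ, (n : ℕ∞) < L ∧ 0 < n ∧ n < m ∧ P n := by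
  constructor
  · rintro ⟨n, hn, hP⟩
    rcases Nat.eq_zero_or_pos n with rfl | hpos
    · exact .inl hP
    rcases hn.lt_or_eq with hlt | rfl
    · exact .inr (.inr ⟨n, lt_of_le_of_lt (by exact_mod_cast hn) hL, hpos, hlt, hP⟩)
    · exact .inr (.inl hP)
  · rintro (hP | hP | ⟨n, -, -, hn, hP⟩)
    exacts [⟨0, m.zero_le, hP⟩, ⟨m, le_rfl, hP⟩, ⟨n, hn.le, hP⟩]

lemma forall_le_iff_endpoints_and_between {P : ℕ → Prop} {m : ℕ} {L : ℕ∞}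
    (hL : (m : ℕ∞) < L) :
    (∀ n ≤ m, P n) ↔ P 0 ∧ P m ∧ ∀ n : ℕ, (n : ℕ∞) < L → ¬(0 < n ∧ n < m) ∨ P n := by
  constructor
  · intro h
    refine ⟨h 0 m.zero_le, h m le_rfl, fun n _ => or_iff_not_imp_left.mpr fun hn => ?_⟩
    exact h n (not_not.mp hn).2.le
  · rintro ⟨h₀, hm, h⟩ n hn
    rcases Nat.eq_zero_or_pos n with rfl | hpos
    · exact h₀
    rcases hn.lt_or_eq with hlt | rfl
    · exact (h n (lt_of_le_of_lt (by exact_mod_cast hn) hL)).resolve_left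
        (not_not.mpr ⟨hpos, hlt⟩)
    · exact hm

section Relativize
variable {σ : ℕ → Set PL} {L : ℕ∞} {o u b : ℕ} {χ : FOW PL} {v : ℕ → ℕ}

lemma foSat_exUpTo (huo : u ≠ o) (hub : u ≠ b) (ho : o ∉ χ.bnd) (hb : b ∉ χ.bnd)
    (hvo : v o = 0) (hL : (v b : ℕ∞) < L) :
    FOSat σ L (.exUpTo o u b χ) v ↔ ∃ n ≤ v b, FOSat σ L χ (Function.update v u n) := by
  simp only [FOW.exUpTo, FOSat, foSat_subst ho, foSat_subst hb, Function.update_self,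
    Function.update_of_ne huo.symm, Function.update_of_ne hub.symm, hvo]
  exact (exists_le_iff_endpoints_or_between
    (P := fun n => FOSat σ L χ (Function.update v u n)) hL).symm

lemma foSat_allUpTo (huo : u ≠ o) (hub : u ≠ b) (ho : o ∉ χ.bnd) (hb : b ∉ χ.bnd)
    (hvo : v o = 0) (hL : (v b : ℕ∞) < L) :
    FOSat σ L (.allUpTo o u b χ) v ↔ ∀ n ≤ v b, FOSat σ L χ (Function.update v u n) := by
  simp only [FOW.allUpTo, FOW.impl, FOSat, foSat_subst ho, foSat_subst hb, Function.update_self,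
    Function.update_of_ne huo.symm, Function.update_of_ne hub.symm, hvo]
  exact (forall_le_iff_endpoints_and_between
    (P := fun n => FOSat σ L χ (Function.update v u n)) hL).symm

lemma foSat_relativize (ho : o ∉ χ.bnd) (hb : b ∉ χ.bnd) (hvo : v o = 0)
    (hL : (v b : ℕ∞) < L) (s : Bool) :
    FOSat σ L (χ.relativize o b s) v ↔ (FOSat σ ((v b + 1 : ℕ) : ℕ∞) χ v ↔ s) := by
  induction χ generalizing s v with
  | not φ ih => cases s <;> simp [FOW.relativize, FOSat, ih ho hb hvo hL]
  | disj φ ψ ih₁ ih₂ | conj φ ψ ih₁ ih₂ =>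
    simp only [FOW.bnd, Finset.mem_union, not_or] at ho hb
    cases s <;>
      simp only [FOW.relativize, FOSat, ih₁ ho.1 hb.1 hvo hL, ih₂ ho.2 hb.2 hvo hL] <;> tauto
  | ex u φ ih | all u φ ih =>
    simp only [FOW.bnd, Finset.mem_insert, not_or] at ho hb
    have huo : u ≠ o := Ne.symm ho.1
    have hub : u ≠ b := Ne.symm hb.1
    have hφ : ∀ s n, FOSat σ L (φ.relativize o b s) (Function.update v u n) ↔
        (FOSat σ ((v b + 1 : ℕ) : ℕ∞) φ (Function.update v u n) ↔ s) := fun s n => by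
      simpa only [Function.update_of_ne hub.symm] using ih (v := Function.update v u n) ho.2 hb.2
        (by rwa [Function.update_of_ne huo.symm]) (by rwa [Function.update_of_ne hub.symm]) s
    have hbo := fun s h => ho.2 (FOW.bnd_relativize_subset o b φ s h)
    have hbb := fun s h => hb.2 (FOW.bnd_relativize_subset o b φ s h)
    cases s <;> simp [FOW.relativize, foSat_exUpTo huo hub (hbo _) (hbb _) hvo hL,
      foSat_allUpTo huo hub (hbo _) (hbb _) hvo hL, hφ, FOSat, ENat.lt_add_one_iff]
  | _ => cases s <;> simp [FOW.relativize, FOSat] <;> omega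

end Relativize

def FOW.somePrefix (o b : ℕ) (φ : FOW PL) : FOW PL :=
  .disj (φ.relativize o o true) (.ex b (.conj (.lt o b) (φ.relativize o b true)))

lemma CoSafetyFO.somePrefix (o b : ℕ) (φ : FOW PL) : CoSafetyFO (φ.somePrefix o b) :=
  .disj (.relativize o o φ true) (.ex o b (.relativize o b φ true))

lemma FOW.free_somePrefix {o b : ℕ} {φ : FOW PL} (hob : o ≠ b) (hφ : φ.free ⊆ {o}) :
    (φ.somePrefix o b).free = {o} := by
  have h₁ := free_relativize_subset o o φ true
  have h₂ := free_relativize_subset o b φ true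
  rw [Finset.subset_singleton_iff'] at hφ
  ext k
  simp only [somePrefix, free, Finset.mem_union, Finset.mem_erase, Finset.mem_insert,
    Finset.mem_singleton]
  grind

lemma foSat_somePrefix {σ : ℕ → Set PL} {L : ℕ∞} {o b : ℕ} {φ : FOW PL} {v : ℕ → ℕ}
    (hob : o ≠ b) (ho : o ∉ φ.bnd) (hb : b ∉ φ.bnd) (hφ : φ.free ⊆ {o}) (hvo : v o = 0)
    (hL : 0 < L) :
    FOSat σ L (φ.somePrefix o b) v ↔
      ∃ Y : ℕ, (Y : ℕ∞) < L ∧ FOSat σ ((Y + 1 : ℕ) : ℕ∞) φ v := by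
  have hbφ : ∀ n : ℕ, (n : ℕ∞) < L →
      (FOSat σ L (φ.relativize o b true) (Function.update v b n) ↔
        FOSat σ ((n + 1 : ℕ) : ℕ∞) φ v) := fun n hn => by
    rw [foSat_relativize ho hb (by rwa [Function.update_of_ne hob]) (by simpa using hn),
      Function.update_self, Bool.coe_true, iff_true]
    exact foSat_congr_valuation fun z hz => by
      rw [Finset.subset_singleton_iff'.mp hφ z hz, Function.update_of_ne hob]
  simp only [FOW.somePrefix, FOSat, foSat_relativize ho ho hvo (by rwa [hvo]), hvo, iff_true,
    Function.update_self, Function.update_of_ne hob]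
  constructor
  · rintro (h | ⟨n, hn, -, h⟩)
    exacts [⟨0, hL, h⟩, ⟨n, hn, (hbφ n hn).mp h⟩]
  · rintro ⟨Y, hY, h⟩
    rcases Nat.eq_zero_or_pos Y with rfl | hpos
    exacts [.inl h, .inr ⟨Y, hY, hpos, (hbφ Y hY).mpr h⟩]

lemma mem_catFin_iff {Lg : Set (List (Set PL))} (h : [] ∉ Lg) {w : List (Set PL)} :
    w ∈ catFin Lg ↔ ∃ Y < w.length, w.take (Y + 1) ∈ Lg := by
  constructor
  · rintro ⟨u, hu, v, rfl⟩
    have hlen : 0 < u.length := List.length_pos_iff.mpr (ne_of_mem_of_not_mem hu h)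
    refine ⟨u.length - 1, by simp; omega, ?_⟩
    rwa [Nat.sub_add_cancel hlen, List.take_left]
  · rintro ⟨Y, -, hY⟩
    exact ⟨w.take (Y + 1), hY, w.drop (Y + 1), (List.take_append_drop _ _).symm⟩

lemma take_mem_LfinFO_iff {φ : FOW PL} {w : List (Set PL)} {Y : ℕ} (hY : Y < w.length) :
    w.take (Y + 1) ∈ LfinFO φ ↔ FOSat (wordOf w) ((Y + 1 : ℕ) : ℕ∞) φ (fun _ => 0) := by
  have hlen : (w.take (Y + 1)).length = Y + 1 := by simp; omega
  rw [LfinFO, Set.mem_ofPred_eq, hlen, ← List.length_pos_iff, hlen]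
  refine (and_iff_right Y.succ_pos).trans (foSat_congr_word (fun n hn => ?_) fun _ _ => ?_)
  · have : n < Y + 1 := by exact_mod_cast hn
    simp [wordOf, this]
  · exact_mod_cast Y.succ_pos

lemma exists_coSafetyFO_LfinFO_eq_catFin {φ : FOW PL} {x : ℕ} (hx : φ.free ⊆ {x}) :
    ∃ ψ : FOW PL, CoSafetyFO ψ ∧ HasOneFree ψ ∧ LfinFO ψ = catFin (LfinFO φ) := by
  obtain ⟨o, ho⟩ := Infinite.exists_notMem_finset φ.bnd
  obtain ⟨b, hb⟩ := Infinite.exists_notMem_finset (insert o φ.bnd)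
  rw [Finset.mem_insert, not_or] at hb
  set φ' := φ.subst x o
  have hφ' : φ'.free ⊆ {o} := (FOW.free_subst_subset x o φ).trans <| by
    rw [(Finset.erase_eq_empty_iff _ _).mpr (Finset.subset_singleton_iff.mp hx)]; rfl
  have hsat : ∀ σ L, FOSat σ L φ' (fun _ => 0) ↔ FOSat σ L φ (fun _ => 0) := fun σ L => by
    rw [foSat_subst ho, Function.update_eq_self]
  have hprefix : ∀ w : List (Set PL), w ≠ [] →
      (FOSat (wordOf w) w.length (φ'.somePrefix o b) (fun _ => 0) ↔
        ∃ Y < w.length, w.take (Y + 1) ∈ LfinFO φ) := fun w hw => by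
    rw [foSat_somePrefix (Ne.symm hb.1) (by rwa [FOW.bnd_subst]) (by rw [FOW.bnd_subst]; exact hb.2)
      hφ' rfl (by exact_mod_cast List.length_pos_iff.mpr hw)]
    refine exists_congr fun Y => ?_
    rw [Nat.cast_lt]
    exact and_congr_right fun hY => (hsat _ _).trans (take_mem_LfinFO_iff hY).symm
  refine ⟨φ'.somePrefix o b, .somePrefix o b φ', ⟨o, FOW.free_somePrefix (Ne.symm hb.1) hφ'⟩, ?_⟩
  ext w
  rw [mem_catFin_iff fun h => h.1 rfl]
  constructor
  · rintro ⟨hw, h⟩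
    exact (hprefix w hw).mp h
  · rintro ⟨Y, hY, h⟩
    have hw : w ≠ [] := List.ne_nil_of_length_pos (Y.zero_le.trans_lt hY)
    exact ⟨hw, (hprefix w hw).mpr ⟨Y, hY, h⟩⟩

end

end CoSafetyPaper
open CoSafetyPaper in
theorem cosafetyFO_fin_eq_fo_fin_concat_general (PL : Type) :
    CoSafetyFOFin PL = catFin '' FOFin PL := by
  ext Lg
  constructor
  · rintro ⟨φ, hφ, hfree, rfl⟩
    exact ⟨LfinFO φ, ⟨φ, hfree, rfl⟩, catFin_LfinFO_of_coSafetyFO hφ⟩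
  · rintro ⟨_, ⟨φ, ⟨x, hx⟩, rfl⟩, rfl⟩
    obtain ⟨ψ, hψ, hfree, hLψ⟩ := exists_coSafetyFO_LfinFO_eq_catFin hx.subset
    exact ⟨ψ, hψ, hfree, hLψ.symm⟩

open CoSafetyPaper in
/-- `⟦coSafetyFO⟧_fin = {L·(2^Σ)^* : L ∈ ⟦FO⟧_fin}`. -/
theorem cosafetyFO_fin_eq_fo_fin_concat (PL : Type) [Fintype PL] :
    CoSafetyFOFin PL = catFin '' FOFin PL :=
  cosafetyFO_fin_eq_fo_fin_concat_general PL
end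

section
/- There is a linear-size translation from coSafetyLTL to coSafetyFO: there exists a constant C > 0 such that for every coSafetyLTL formula φ there exists a coSafetyFO formula φ'(x) with exactly one free variable such that L(φ) = L(φ'(x)) and |φ'(x)| ≤ C·|φ|. -/
namespace CoSafetyPaper

/-!
A coSafetyLTL formula `φ` is translated by structural recursion into a formula saying that `φ`
holds at the position of a variable `x`. Since coSafetyFO only quantifies strictly above a bound,
`φ U ψ` at `x` is rendered as "some `y > x` has `ψ` at `y - 1`, and every `x < z < y` has `φ` at
`z - 1`". So the recursion also produces, for every subformula, a formula saying that it holds at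
`x - 1`; there the quantifiers are bounded below by the free variable, which denotes position `0`,
and a letter at `x - 1` is read either at `0` (when `x = 1`) or at the immediate predecessor of `x`.
Every clause uses each immediate subformula once, so the size grows linearly.
-/

variable {PL : Type}

def noneBetween (a b z : ℕ) : FOW PL :=
  .all z (FOW.impl (.conj (.lt a z) (.lt z b)) (.not (.eq z z)))

def atSucc (a z : ℕ) (χ : FOW PL) : FOW PL :=
  .ex z (.conj (.lt a z) (.conj (noneBetween a z (z + 1)) χ))

def atPred (v n : ℕ) (χ : ℕ → FOW PL) : FOW PL :=
  .disj (.conj (noneBetween 0 v n) (χ 0))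
    (.ex n (.conj (.lt 0 n) (.conj (.lt n v) (.conj (noneBetween n v (n + 1)) (χ n)))))

lemma coSafetyFO_noneBetween (a b z : ℕ) : CoSafetyFO (noneBetween a b z : FOW PL) :=
  .all a z b (.ne z z)

lemma coSafetyFO_atSucc {a z : ℕ} {χ : FOW PL} (hχ : CoSafetyFO χ) : CoSafetyFO (atSucc a z χ) :=
  .ex a z (.conj (coSafetyFO_noneBetween a z (z + 1)) hχ)

lemma coSafetyFO_atPred (v n : ℕ) {χ : ℕ → FOW PL} (hχ : ∀ u, CoSafetyFO (χ u)) :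
    CoSafetyFO (atPred v n χ) :=
  .disj (.conj (coSafetyFO_noneBetween 0 v n) (hχ 0))
    (.ex 0 n (.conj (.lt n v) (.conj (coSafetyFO_noneBetween n v (n + 1)) (hχ n))))

section Semantics

variable {σ : ℕ → Set PL} {val : ℕ → ℕ}

lemma foSat_impl {φ ψ : FOW PL} {L : ℕ∞} :
    FOSat σ L (FOW.impl φ ψ) val ↔ (FOSat σ L φ val → FOSat σ L ψ val) := by
  simp only [FOW.impl, FOSat, imp_iff_not_or]

lemma foSat_le {x y : ℕ} {L : ℕ∞} : FOSat σ L (FOW.le y x : FOW PL) val ↔ val y ≤ val x := by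
  simp only [FOW.le, FOSat, Nat.le_iff_lt_or_eq]

lemma foSat_noneBetween {a b z : ℕ} (ha : z ≠ a) (hb : z ≠ b) :
    FOSat σ ⊤ (noneBetween a b z) val ↔ val b ≤ val a + 1 := by
  simp only [noneBetween, foSat_impl, FOSat, ENat.natCast_lt_top, true_implies,
    Function.update_self, Function.update_of_ne ha.symm, Function.update_of_ne hb.symm, not_true,
    imp_false, not_and, not_lt]
  exact ⟨fun h => h _ (Nat.lt_succ_self _), fun h m hm => by omega⟩

lemma foSat_atSucc {a z : ℕ} {χ : FOW PL} {P : ℕ → Prop} (hz : a < z)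
    (hχ : ∀ m, FOSat σ ⊤ χ (Function.update val z m) ↔ P m) :
    FOSat σ ⊤ (atSucc a z χ) val ↔ P (val a + 1) := by
  simp only [atSucc, FOSat, ENat.natCast_lt_top, true_and, hχ,
    foSat_noneBetween (by omega : z + 1 ≠ a) (by omega : z + 1 ≠ z), Function.update_self,
    Function.update_of_ne hz.ne]
  exact ⟨fun ⟨m, hlt, hle, hm⟩ => (by omega : m = val a + 1) ▸ hm,
    fun h => ⟨_, Nat.lt_succ_self _, le_rfl, h⟩⟩

lemma foSat_atPred {v n : ℕ} {χ : ℕ → FOW PL} {P : ℕ → Prop} (hn : v < n) (h0 : val 0 = 0)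
    (hv : 0 < val v) (hχ : ∀ u val', FOSat σ ⊤ (χ u) val' ↔ P (val' u)) :
    FOSat σ ⊤ (atPred v n χ) val ↔ P (val v - 1) := by
  simp only [atPred, FOSat, ENat.natCast_lt_top, true_and, hχ, foSat_noneBetween (by omega : n ≠ 0)
    (by omega : n ≠ v), foSat_noneBetween (by omega : n + 1 ≠ n) (by omega : n + 1 ≠ v),
    Function.update_self, Function.update_of_ne (by omega : v ≠ n),
    Function.update_of_ne (by omega : 0 ≠ n), h0]
  constructor
  · rintro (⟨hle, hP⟩ | ⟨m, hm0, hmv, hle, hP⟩)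
    · rwa [(by omega : val v - 1 = 0)]
    · rwa [(by omega : val v - 1 = m)]
  · intro hP
    rcases Nat.lt_or_ge (val v) 2 with hlt | hge
    · exact Or.inl ⟨by omega, (by omega : val v - 1 = 0) ▸ hP⟩
    · exact Or.inr ⟨val v - 1, by omega, by omega, by omega, hP⟩

end Semantics

lemma sat_untl_iff_exists_gt {σ : ℕ → Set PL} {φ ψ : LTLF PL} {i : ℕ} :
    Sat σ ⊤ (.untl φ ψ) i ↔
      ∃ y, i < y ∧ Sat σ ⊤ ψ (y - 1) ∧ ∀ z, i < z → z < y → Sat σ ⊤ φ (z - 1) := by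
  simp only [Sat, ENat.natCast_lt_top, true_and]
  constructor
  · rintro ⟨j, hij, hψ, hφ⟩
    exact ⟨j + 1, by omega, hψ, fun z hiz hzj => hφ _ (by omega) (by omega)⟩
  · rintro ⟨y, hiy, hψ, hφ⟩
    refine ⟨y - 1, by omega, hψ, fun k hik hky => ?_⟩
    simpa using hφ (k + 1) (by omega) (by omega)

lemma sat_untl_sub_one_iff {σ : ℕ → Set PL} {φ ψ : LTLF PL} {i : ℕ} (hi : 0 < i) :
    Sat σ ⊤ (.untl φ ψ) (i - 1) ↔
      ∃ y, 0 < y ∧ i ≤ y ∧ Sat σ ⊤ ψ (y - 1) ∧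
        ∀ z, 0 < z → z < y → z < i ∨ Sat σ ⊤ φ (z - 1) := by
  rw [sat_untl_iff_exists_gt]
  refine exists_congr fun y => ?_
  constructor
  · rintro ⟨hiy, hψ, hφ⟩
    exact ⟨by omega, by omega, hψ,
      fun z _ hzy => or_iff_not_imp_left.2 fun hz => hφ z (by omega) hzy⟩
  · rintro ⟨-, hiy, hψ, hφ⟩
    exact ⟨by omega, hψ, fun z hiz hzy => (hφ z (by omega) hzy).resolve_left (by omega)⟩

lemma sat_next_top {σ : ℕ → Set PL} {φ : LTLF PL} {i : ℕ} :
    Sat σ ⊤ (.next φ) i ↔ Sat σ ⊤ φ (i + 1) := by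
  simp [Sat]

lemma sat_wnext_top {σ : ℕ → Set PL} {φ : LTLF PL} {i : ℕ} :
    Sat σ ⊤ (.wnext φ) i ↔ Sat σ ⊤ φ (i + 1) := by
  simp [Sat]

/-- `toFO φ false v n` says that `φ` holds at the position of variable `v`, and `toFO φ true v n`
that it holds at the position before it; bound variables are drawn from those `≥ n`. `R` lies
outside the fragment and gets a dummy image. -/
def toFO : LTLF PL → Bool → ℕ → ℕ → FOW PL
  | .pos p, false, v, _ => .pred p v
  | .nneg p, false, v, _ => .not (.pred p v)
  | .pos p, true, v, n => atPred v n (.pred p)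
  | .nneg p, true, v, n => atPred v n fun u => .not (.pred p u)
  | .disj φ ψ, sh, v, n => .disj (toFO φ sh v n) (toFO ψ sh v n)
  | .conj φ ψ, sh, v, n => .conj (toFO φ sh v n) (toFO ψ sh v n)
  | .next φ, false, v, n => atSucc v n (toFO φ false n (n + 2))
  | .wnext φ, false, v, n => atSucc v n (toFO φ false n (n + 2))
  | .next φ, true, v, n => toFO φ false v n
  | .wnext φ, true, v, n => toFO φ false v n
  | .untl φ ψ, false, v, n =>
      .ex n (.conj (.lt v n) (.conj (toFO ψ true n (n + 2))
        (.all (n + 1) (FOW.impl (.conj (.lt v (n + 1)) (.lt (n + 1) n))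
          (toFO φ true (n + 1) (n + 2))))))
  | .untl φ ψ, true, v, n =>
      .ex n (.conj (.lt 0 n) (.conj (FOW.le v n) (.conj (toFO ψ true n (n + 2))
        (.all (n + 1) (FOW.impl (.conj (.lt 0 (n + 1)) (.lt (n + 1) n))
          (.disj (.lt (n + 1) v) (toFO φ true (n + 1) (n + 2))))))))
  | .rel _ _, _, _, _ => .eq 0 0

lemma coSafetyFO_toFO {φ : LTLF PL} (hφ : CoSafetyLTL φ) :
    ∀ (sh : Bool) (v n : ℕ), CoSafetyFO (toFO φ sh v n) := by
  induction hφ with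
  | pos p =>
    rintro (_ | _) v n
    · exact .pred p v
    · exact coSafetyFO_atPred v n fun u => .pred p u
  | nneg p =>
    rintro (_ | _) v n
    · exact .npred p v
    · exact coSafetyFO_atPred v n fun u => .npred p u
  | disj _ _ ihφ ihψ => exact fun sh v n => .disj (ihφ sh v n) (ihψ sh v n)
  | conj _ _ ihφ ihψ => exact fun sh v n => .conj (ihφ sh v n) (ihψ sh v n)
  | next _ ih | wnext _ ih =>
    rintro (_ | _) v n
    · exact coSafetyFO_atSucc (ih false n (n + 2))
    · exact ih false v n
  | untl _ _ ihφ ihψ =>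
    rintro (_ | _) v n
    · exact .ex v n (.conj (ihψ true n (n + 2)) (.all v (n + 1) n (ihφ true (n + 1) (n + 2))))
    · exact .ex 0 n (.conj (.disj (.lt v n) (.eq v n)) (.conj (ihψ true n (n + 2))
        (.all 0 (n + 1) n (.disj (.lt (n + 1) v) (ihφ true (n + 1) (n + 2))))))

lemma size_toFO_le {φ : LTLF PL} (hφ : CoSafetyLTL φ) :
    ∀ (sh : Bool) (v n : ℕ), (toFO φ sh v n).size ≤ 47 * φ.size := by
  induction hφ <;> rintro (_ | _) v n <;>
    simp [toFO, FOW.size, LTLF.size, atPred, atSucc, noneBetween, FOW.impl, FOW.le] at * <;>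
    grind

lemma free_toFO_subset (φ : LTLF PL) :
    ∀ (sh : Bool) (v n : ℕ), v < n → (toFO φ sh v n).free ⊆ {0, v} := by
  induction φ with
  | rel => intros; simp [toFO, FOW.free]
  | _ =>
    rintro (_ | _) v n hvn <;>
      simp [toFO, FOW.free, atPred, atSucc, noneBetween, FOW.impl, FOW.le,
        Finset.subset_iff] at * <;>
      grind

lemma mem_free_toFO {φ : LTLF PL} (hφ : CoSafetyLTL φ) :
    ∀ (sh : Bool) (v n : ℕ), v < n → v ∈ (toFO φ sh v n).free := by
  induction hφ <;>
    rintro (_ | _) v n hvn <;>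
    simp [toFO, FOW.free, atPred, atSucc, noneBetween, FOW.impl, FOW.le] at * <;>
    grind

lemma foSat_toFO_untl (σ : ℕ → Set PL) {φ ψ : LTLF PL}
    (ihφ : ∀ (v n : ℕ) (val : ℕ → ℕ), v < n → val 0 = 0 → 0 < val v →
      (FOSat σ ⊤ (toFO φ true v n) val ↔ Sat σ ⊤ φ (val v - 1)))
    (ihψ : ∀ (v n : ℕ) (val : ℕ → ℕ), v < n → val 0 = 0 → 0 < val v →
      (FOSat σ ⊤ (toFO ψ true v n) val ↔ Sat σ ⊤ ψ (val v - 1)))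
    (sh : Bool) {v n : ℕ} {val : ℕ → ℕ} (hvn : v < n) (h0 : val 0 = 0) (hv : sh.toNat ≤ val v) :
    FOSat σ ⊤ (toFO (.untl φ ψ) sh v n) val ↔ Sat σ ⊤ (.untl φ ψ) (val v - sh.toNat) := by
  have hψ : ∀ m, 0 < m →
      (FOSat σ ⊤ (toFO ψ true n (n + 2)) (Function.update val n m) ↔ Sat σ ⊤ ψ (m - 1)) :=
    fun m hm => by
      simpa using ihψ n (n + 2) (Function.update val n m) (by omega)
        (by simp [Function.update_of_ne (by omega : 0 ≠ n), h0]) (by simpa)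
  have hφ : ∀ m z, 0 < z →
      (FOSat σ ⊤ (toFO φ true (n + 1) (n + 2))
        (Function.update (Function.update val n m) (n + 1) z) ↔ Sat σ ⊤ φ (z - 1)) :=
    fun m z hz => by
      simpa using ihφ (n + 1) (n + 2) (Function.update (Function.update val n m) (n + 1) z)
        (by omega) (by simp [Function.update_of_ne (by omega : 0 ≠ n), h0]) (by simpa)
  cases sh
  · simp only [toFO, FOSat, foSat_impl, ENat.natCast_lt_top, true_and, true_implies,
      and_imp, Function.update_self, Function.update_of_ne (by omega : v ≠ n),
      Function.update_of_ne (by omega : v ≠ n + 1), Function.update_of_ne (by omega : n ≠ n + 1),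
      Bool.toNat_false, Nat.sub_zero, sat_untl_iff_exists_gt]
    exact exists_congr fun m => and_congr_right fun hm => and_congr (hψ m (by omega))
      (forall_congr' fun z => imp_congr_right fun hz => imp_congr_right fun _ =>
        hφ m z (by omega))
  · simp only [toFO, FOSat, foSat_impl, foSat_le, ENat.natCast_lt_top, true_and, true_implies,
      and_imp, Function.update_self, Function.update_of_ne (by omega : v ≠ n),
      Function.update_of_ne (by omega : v ≠ n + 1), Function.update_of_ne (by omega : n ≠ n + 1),
      Function.update_of_ne (by omega : 0 ≠ n), Function.update_of_ne (by omega : 0 ≠ n + 1), h0,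
      Bool.toNat_true, sat_untl_sub_one_iff (hv : 0 < val v)]
    exact exists_congr fun m => and_congr_right fun hm => and_congr_right fun _ =>
      and_congr (hψ m hm) (forall_congr' fun z => imp_congr_right fun hz => imp_congr_right
        fun _ => or_congr_right (hφ m z hz))

theorem foSat_toFO (σ : ℕ → Set PL) {φ : LTLF PL} (hφ : CoSafetyLTL φ) :
    ∀ (sh : Bool) (v n : ℕ) (val : ℕ → ℕ), v < n → val 0 = 0 → sh.toNat ≤ val v →
      (FOSat σ ⊤ (toFO φ sh v n) val ↔ Sat σ ⊤ φ (val v - sh.toNat)) := by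
  induction hφ with
  | pos p =>
    rintro (_ | _) v n val hvn h0 hv
    · simp [toFO, FOSat, Sat]
    · exact foSat_atPred hvn h0 hv fun u val' => Iff.rfl
  | nneg p =>
    rintro (_ | _) v n val hvn h0 hv
    · simp [toFO, FOSat, Sat]
    · exact foSat_atPred hvn h0 hv fun u val' => Iff.rfl
  | disj _ _ ihφ ihψ =>
    intro sh v n val hvn h0 hv
    simp only [toFO, FOSat, Sat, ihφ sh v n val hvn h0 hv, ihψ sh v n val hvn h0 hv]
  | conj _ _ ihφ ihψ =>
    intro sh v n val hvn h0 hv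
    simp only [toFO, FOSat, Sat, ihφ sh v n val hvn h0 hv, ihψ sh v n val hvn h0 hv]
  | next _ ih | wnext _ ih =>
    rintro (_ | _) v n val hvn h0 hv
    · simp only [toFO, sat_next_top, sat_wnext_top, Bool.toNat_false, Nat.sub_zero]
      refine foSat_atSucc hvn fun m => ?_
      simpa using ih false n (n + 2) (Function.update val n m) (by omega)
        (by simp [Function.update_of_ne (by omega : 0 ≠ n), h0]) (by simp)
    · simp only [toFO, sat_next_top, sat_wnext_top, Bool.toNat_true]
      rw [Nat.sub_add_cancel (m := 1) hv]
      simpa using ih false v n val hvn h0 (by simp)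
  | untl _ _ ihφ ihψ =>
    exact fun sh v n val hvn h0 hv => foSat_toFO_untl σ (fun v n val => ihφ true v n val)
      (fun v n val => ihψ true v n val) sh hvn h0 hv

end CoSafetyPaper

open CoSafetyPaper in
theorem cosafetyltl_to_cosafetyFO_linear_general (PL : Type) :
    ∃ C : ℕ, 0 < C ∧ ∀ φ : LTLF PL, CoSafetyLTL φ →
      ∃ ψ : FOW PL, CoSafetyFO ψ ∧ HasOneFree ψ ∧ LinfL φ = LinfFO ψ ∧
        FOW.size ψ ≤ C * LTLF.size φ := by
  refine ⟨47, by norm_num, fun φ hφ => ⟨toFO φ false 0 1, coSafetyFO_toFO hφ false 0 1, ⟨0, ?_⟩,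
    ?_, size_toFO_le hφ false 0 1⟩⟩
  · refine subset_antisymm ?_ (Finset.singleton_subset_iff.2 (mem_free_toFO hφ false 0 1 one_pos))
    simpa using free_toFO_subset φ false 0 1 one_pos
  · ext σ
    exact (foSat_toFO σ hφ false 0 1 (fun _ => 0) one_pos rfl le_rfl).symm

open CoSafetyPaper in
/-- There is a linear-size equivalence-preserving translation
from coSafetyLTL to coSafetyFO (over infinite words). -/
theorem cosafetyltl_to_cosafetyFO_linear (PL : Type) [Fintype PL] :
    ∃ C : ℕ, 0 < C ∧ ∀ φ : LTLF PL, CoSafetyLTL φ →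
      ∃ ψ : FOW PL, CoSafetyFO ψ ∧ HasOneFree ψ ∧ LinfL φ = LinfFO ψ ∧
        FOW.size ψ ≤ C * LTLF.size φ :=
  cosafetyltl_to_cosafetyFO_linear_general PL
end
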